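/- For any topological space X and infinite cardinal κ, L(X^c_κ) ≤ 2^{L(X)·wt(X)·κ}, where X^c_κ is the G^c_κ-modification of X. -/

import Mathlib

/-!
Put `θ = L(X)·wt(X)·κ` and let `𝒢` cover `X` by `G^c_κ`-sets `G = ⋂ 𝒰_G = ⋂_{U ∈ 𝒰_G} cl U`.
For `|B| ≤ θ`, the closure of `B` is covered by `≤ 2^θ` members of `𝒢`: a point `y ∈ cl B` lies
in every `G` whose trace `{U ∩ B | U ∈ 𝒰_G}` on `B` equals that of a member of `𝒢` containing `y`.
A closing-off argument of length `θ⁺` yields a set `A` of size `2^θ` that is saturated for a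
cover witnessing `wt(X)`, so that every point of `cl A` is in the closure of a `θ`-subset of `A`,
and that meets the complement of `⋃_{V ∈ 𝒱} cl V` whenever it is nonempty, for every family `𝒱`
of `≤ θ` sets taken from the `𝒰_G` attached to those subsets. The `≤ 2^θ` members of `𝒢` so
attached to `A` cover `X`: were a point `q` missed, pick for each of them some `U_G ∈ 𝒰_G` with
`q ∉ cl U_G`; a Lindelöf subfamily of the `U_G` covering the closed set `cl A` would be such a
family `𝒱` whose closures contain `A`.
-/
open Cardinal Set TopologicalSpace

universe u

/-- The tightness `t(X)`: the least infinite cardinal `κ` such that whenever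
`x ∈ closure A` there is `B ⊆ A` with `#B ≤ κ` and `x ∈ closure B`. -/
noncomputable def tightness (X : Type u) [TopologicalSpace X] : Cardinal.{u} :=
  sInf {κ : Cardinal.{u} | ℵ₀ ≤ κ ∧ ∀ (A : Set X) (x : X), x ∈ closure A →
    ∃ B ⊆ A, #B ≤ κ ∧ x ∈ closure B}

/-- The `κ`-closure of a set `A`. -/
noncomputable def clk {X : Type u} [TopologicalSpace X] (κ : Cardinal.{u}) (A : Set X) : Set X :=
  ⋃ (B : Set X) (_ : B ⊆ A ∧ #B ≤ κ), closure B

/-- A cover `𝒞` witnessing that `wt X ≤ κ`. -/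
noncomputable def IsWtWitness {X : Type u} [TopologicalSpace X] (κ : Cardinal.{u}) (𝒞 : Set (Set X)) : Prop :=
  ⋃₀ 𝒞 = Set.univ ∧ #𝒞 ≤ 2 ^ κ ∧ ∀ C ∈ 𝒞, tightness ↥C ≤ κ ∧ clk (2 ^ κ) C = Set.univ

/-- The weak tightness `wt(X)`. -/
noncomputable def wt (X : Type u) [TopologicalSpace X] : Cardinal.{u} :=
  sInf {κ : Cardinal.{u} | ℵ₀ ≤ κ ∧ ∃ 𝒞 : Set (Set X), IsWtWitness κ 𝒞}

/-- The Lindelöf number `L(X)`. -/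
noncomputable def LindelofNumber (X : Type u) [TopologicalSpace X] : Cardinal.{u} :=
  sInf {κ : Cardinal.{u} | ℵ₀ ≤ κ ∧ ∀ 𝒰 : Set (Set X), (∀ U ∈ 𝒰, IsOpen U) →
    ⋃₀ 𝒰 = Set.univ → ∃ 𝒱 ⊆ 𝒰, #𝒱 ≤ κ ∧ ⋃₀ 𝒱 = Set.univ}

/-- The pseudocharacter `ψ(X)`. -/
noncomputable def psi (X : Type u) [TopologicalSpace X] : Cardinal.{u} :=
  sInf {κ : Cardinal.{u} | ℵ₀ ≤ κ ∧ ∀ x : X, ∃ 𝒰 : Set (Set X),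
    #𝒰 ≤ κ ∧ (∀ U ∈ 𝒰, IsOpen U ∧ x ∈ U) ∧ ⋂₀ 𝒰 = {x}}

/-- The closed pseudocharacter `ψ_c(X)`. -/
noncomputable def psic (X : Type u) [TopologicalSpace X] : Cardinal.{u} :=
  sInf {κ : Cardinal.{u} | ℵ₀ ≤ κ ∧ ∀ x : X, ∃ 𝒰 : Set (Set X),
    #𝒰 ≤ κ ∧ (∀ U ∈ 𝒰, IsOpen U ∧ x ∈ U) ∧ (⋂ U ∈ 𝒰, closure U) = {x}}

/-- `A` is `𝒞`-saturated: `A ∩ C` is dense in `A` for every `C ∈ 𝒞`. -/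
noncomputable def Saturated {X : Type u} [TopologicalSpace X] (𝒞 : Set (Set X)) (A : Set X) : Prop :=
  ∀ C ∈ 𝒞, A ⊆ closure (A ∩ C)

/-- The π-character `πχ(x, X)` of a point: least cardinality of a local π-base at `x`. -/
noncomputable def piCharPt {X : Type u} [TopologicalSpace X] (x : X) : Cardinal.{u} :=
  sInf {κ : Cardinal.{u} | ∃ ℬ : Set (Set X), #ℬ ≤ κ ∧
    (∀ B ∈ ℬ, IsOpen B ∧ B.Nonempty) ∧ ∀ U : Set X, IsOpen U → x ∈ U → ∃ B ∈ ℬ, B ⊆ U}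

/-- The π-character `πχ(X)`. -/
noncomputable def piChar (X : Type u) [TopologicalSpace X] : Cardinal.{u} :=
  ⨆ x : X, piCharPt x

/-- The character `χ(x, X)` of a point: least cardinality of a local base at `x`. -/
noncomputable def charPt {X : Type u} [TopologicalSpace X] (x : X) : Cardinal.{u} :=
  sInf {κ : Cardinal.{u} | ∃ ℬ : Set (Set X), #ℬ ≤ κ ∧
    (∀ B ∈ ℬ, IsOpen B ∧ x ∈ B) ∧ ∀ U : Set X, IsOpen U → x ∈ U → ∃ B ∈ ℬ, B ⊆ U}

/-- The character `χ(X)`. -/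
noncomputable def character (X : Type u) [TopologicalSpace X] : Cardinal.{u} :=
  ⨆ x : X, charPt x

/-- The density `d(X)`: least cardinality of a dense subset. -/
noncomputable def density (X : Type u) [TopologicalSpace X] : Cardinal.{u} :=
  sInf {κ : Cardinal.{u} | ∃ D : Set X, Dense D ∧ #D ≤ κ}

/-- A space is homogeneous if its homeomorphism group acts transitively. -/
noncomputable def Homogeneous (X : Type u) [TopologicalSpace X] : Prop :=
  ∀ x y : X, ∃ h : X ≃ₜ X, h x = y

/-- A space is power homogeneous if some (nonempty) power of it is homogeneous. -/
noncomputable def PowerHomogeneous (X : Type u) [TopologicalSpace X] : Prop :=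
  ∃ I : Type u, Nonempty I ∧ Homogeneous (I → X)

/-- A `G^c_κ`-set: `G = ⋂𝒰 = ⋂_{U ∈ 𝒰} closure U` for a family `𝒰` of `≤ κ` open sets. -/
noncomputable def GcSet {X : Type u} [TopologicalSpace X] (κ : Cardinal.{u}) (G : Set X) : Prop :=
  ∃ 𝒰 : Set (Set X), #𝒰 ≤ κ ∧ (∀ U ∈ 𝒰, IsOpen U) ∧
    G = ⋂₀ 𝒰 ∧ G = ⋂ U ∈ 𝒰, closure U

/-- A subset is subseparable if it is contained in the closure of a countable set. -/
noncomputable def Subseparable {X : Type u} [TopologicalSpace X] (A : Set X) : Prop :=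
  ∃ c : Set X, c.Countable ∧ A ⊆ closure c

section CardinalInvariants

variable {X : Type u} [TopologicalSpace X]

theorem exists_subset_card_le_tightness_of_mem_closure {A : Set X} {x : X}
    (hx : x ∈ closure A) : ∃ B ⊆ A, #B ≤ tightness X ∧ x ∈ closure B := by
  refine (csInf_mem (s := {κ : Cardinal.{u} | ℵ₀ ≤ κ ∧ ∀ (A : Set X) (x : X),
    x ∈ closure A → ∃ B ⊆ A, #B ≤ κ ∧ x ∈ closure B}) ?_).2 A x hx
  exact ⟨max #X ℵ₀, le_max_right _ _, fun A x hx => ⟨A, subset_rfl,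
    (mk_set_le A).trans (le_max_left _ _), hx⟩⟩

theorem lindelofNumber_mem :
    LindelofNumber X ∈ {κ : Cardinal.{u} | ℵ₀ ≤ κ ∧ ∀ 𝒰 : Set (Set X), (∀ U ∈ 𝒰, IsOpen U) →
      ⋃₀ 𝒰 = Set.univ → ∃ 𝒱 ⊆ 𝒰, #𝒱 ≤ κ ∧ ⋃₀ 𝒱 = Set.univ} := by
  refine csInf_mem ⟨max #X ℵ₀, le_max_right _ _, fun 𝒰 _ hcov => ?_⟩
  choose U hU𝒰 hxU using fun x : X => mem_sUnion.1 (hcov ▸ mem_univ x)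
  exact ⟨range U, range_subset_iff.2 hU𝒰, mk_range_le.trans (le_max_left _ _),
    eq_univ_of_forall fun x => ⟨U x, mem_range_self x, hxU x⟩⟩

theorem aleph0_le_lindelofNumber : ℵ₀ ≤ LindelofNumber X := lindelofNumber_mem.1

theorem IsClosed.exists_subcover_card_le_lindelofNumber {F : Set X} (hF : IsClosed F)
    {𝒰 : Set (Set X)} (hopen : ∀ U ∈ 𝒰, IsOpen U) (hcov : F ⊆ ⋃₀ 𝒰) :
    ∃ 𝒱 ⊆ 𝒰, #𝒱 ≤ LindelofNumber X ∧ F ⊆ ⋃₀ 𝒱 := by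
  obtain ⟨𝒱, h𝒱, h𝒱card, h𝒱cov⟩ := lindelofNumber_mem.2 (insert Fᶜ 𝒰)
    (forall_mem_insert.2 ⟨hF.isOpen_compl, hopen⟩)
    (by rw [sUnion_insert, ← compl_subset_iff_union, compl_compl]; exact hcov)
  refine ⟨𝒱 \ {Fᶜ}, sdiff_singleton_subset_iff.2 h𝒱, (mk_le_mk_of_subset sdiff_subset).trans h𝒱card,
    fun x hx => ?_⟩
  obtain ⟨V, hV, hxV⟩ := mem_sUnion.1 (h𝒱cov ▸ mem_univ x)
  exact ⟨V, ⟨hV, by rintro rfl; exact hxV hx⟩, hxV⟩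

theorem lindelofNumber_le_of_isTopologicalBasis {𝓑 : Set (Set X)} (h𝓑 : IsTopologicalBasis 𝓑)
    {μ : Cardinal.{u}} (hμ : ℵ₀ ≤ μ)
    (hsub : ∀ 𝒢 ⊆ 𝓑, ⋃₀ 𝒢 = Set.univ → ∃ 𝒢' ⊆ 𝒢, #𝒢' ≤ μ ∧ ⋃₀ 𝒢' = Set.univ) :
    LindelofNumber X ≤ μ := by
  refine csInf_le' ⟨hμ, fun 𝒰 hopen hcov => ?_⟩
  obtain ⟨𝒢', h𝒢', h𝒢'card, h𝒢'cov⟩ := hsub {B ∈ 𝓑 | ∃ U ∈ 𝒰, B ⊆ U} (sep_subset _ _) <| by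
    refine eq_univ_of_forall fun x => ?_
    obtain ⟨U, hU, hxU⟩ := mem_sUnion.1 (hcov ▸ mem_univ x)
    obtain ⟨B, hB, hxB, hBU⟩ := (h𝓑.isOpen_iff.1 (hopen U hU)) x hxU
    exact ⟨B, ⟨hB, U, hU, hBU⟩, hxB⟩
  choose! U hU𝒰 hBU using fun B (hB : B ∈ 𝒢') => (h𝒢' hB).2
  refine ⟨U '' 𝒢', image_subset_iff.2 hU𝒰, mk_image_le.trans h𝒢'card, ?_⟩
  refine eq_univ_of_forall fun x => ?_
  obtain ⟨B, hB, hxB⟩ := mem_sUnion.1 (h𝒢'cov ▸ mem_univ x)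
  exact ⟨U B, mem_image_of_mem U hB, hBU B hB hxB⟩

theorem wt_mem : wt X ∈ {κ : Cardinal.{u} | ℵ₀ ≤ κ ∧ ∃ 𝒞 : Set (Set X), IsWtWitness κ 𝒞} := by
  have h1 : (1 : Cardinal.{u}) ≤ 2 ^ max #X ℵ₀ :=
    Cardinal.one_le_iff_ne_zero.2 (power_ne_zero _ two_ne_zero)
  refine csInf_mem ⟨max #X ℵ₀, le_max_right _ _, {Set.univ}, sUnion_singleton _,
    by simpa using h1, ?_⟩
  rintro C (rfl : C = Set.univ)
  refine ⟨csInf_le' ⟨le_max_right _ _, fun A x hx => ⟨A, subset_rfl, ?_, hx⟩⟩, ?_⟩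
  · exact (mk_set_le A).trans (by rw [mk_univ]; exact le_max_left _ _)
  · refine eq_univ_of_forall fun x =>
      mem_biUnion (x := {x}) ⟨subset_univ _, ?_⟩ (subset_closure rfl)
    simpa using h1

theorem aleph0_le_wt : ℵ₀ ≤ wt X := wt_mem.1

theorem exists_isWtWitness_wt : ∃ 𝒞 : Set (Set X), IsWtWitness (wt X) 𝒞 := wt_mem.2

end CardinalInvariants

section ClosingOff

variable {α β : Type u} {θ : Cardinal.{u}}

def boundedSubsets (θ : Cardinal.{u}) (A : Set α) : Set (Set α) := {B | B ⊆ A ∧ #B ≤ θ}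

theorem mk_boundedSubsets_le (hθ : ℵ₀ ≤ θ) {A : Set α} (hA : #A ≤ 2 ^ θ) :
    #(boundedSubsets θ A) ≤ 2 ^ θ :=
  calc #(boundedSubsets θ A) ≤ max #A ℵ₀ ^ θ := mk_bounded_subset_le A θ
    _ ≤ (2 ^ θ) ^ θ := power_le_power_right (max_le hA (hθ.trans (cantor θ).le))
    _ = 2 ^ θ := by rw [← power_mul, mul_eq_self hθ]

theorem mk_biUnion_le_of_forall_le {ι : Type u} {s : Set ι} {f : ι → Set α} {c : Cardinal.{u}}
    (hc : ℵ₀ ≤ c) (hs : #s ≤ c) (hf : ∀ i ∈ s, #(f i) ≤ c) : #(⋃ i ∈ s, f i) ≤ c :=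
  (mk_biUnion_le f s).trans <|
    (mul_le_mul' hs (ciSup_le' fun i : s => hf i.1 i.2)).trans_eq (mul_eq_self hc)

theorem mk_biUnion_boundedSubsets_le (hθ : ℵ₀ ≤ θ) {A : Set α} (hA : #A ≤ 2 ^ θ)
    {P : Set α → Set β} (hP : ∀ B ∈ boundedSubsets θ A, #(P B) ≤ 2 ^ θ) :
    #(⋃ B ∈ boundedSubsets θ A, P B) ≤ 2 ^ θ :=
  mk_biUnion_le_of_forall_le (hθ.trans (cantor θ).le) (mk_boundedSubsets_le hθ hA) hP

theorem exists_mem_boundedSubsets_of_subset_biUnion (hθ : ℵ₀ ≤ θ) {P : Set α → Set β}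
    {A : Set α} {𝒱 : Set β} (h𝒱 : 𝒱 ⊆ ⋃ B ∈ boundedSubsets θ A, P B) (hcard : #𝒱 ≤ θ) :
    ∃ B ∈ boundedSubsets θ A, 𝒱 ⊆ ⋃ B' ∈ boundedSubsets θ B, P B' := by
  choose! D hD hvD using fun v (hv : v ∈ 𝒱) => mem_iUnion₂.1 (h𝒱 hv)
  refine ⟨⋃ v ∈ 𝒱, D v, ⟨iUnion₂_subset fun v hv => (hD v hv).1,
    mk_biUnion_le_of_forall_le hθ hcard fun v hv => (hD v hv).2⟩, fun v hv => ?_⟩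
  exact mem_iUnion₂.2 ⟨D v, ⟨subset_biUnion_of_mem hv, (hD v hv).2⟩, hvD v hv⟩

/-- `A` is the union of the stages `S o = ⋃ {f B | B ⊆ ⋃_{i<o} S i, #B ≤ θ}` for `o < θ⁺`;
as `θ⁺` is regular, every subset of `A` of size `≤ θ` already lies below some stage. -/
theorem exists_forall_boundedSubsets_subset (hθ : ℵ₀ ≤ θ) (f : Set α → Set α)
    (hf : ∀ B : Set α, #B ≤ θ → #(f B) ≤ 2 ^ θ) :
    ∃ A : Set α, #A ≤ 2 ^ θ ∧ ∀ B ∈ boundedSubsets θ A, f B ⊆ A := by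
  obtain ⟨S, hS⟩ : ∃ S : Ordinal.{u} → Set α,
      ∀ o, S o = ⋃ B ∈ boundedSubsets θ (⋃ i < o, S i), f B :=
    ⟨Ordinal.lt_wf.fix fun o IH => ⋃ B ∈ boundedSubsets θ (⋃ (i) (h : i < o), IH i h), f B,
      Ordinal.lt_wf.fix_eq _⟩
  have hθ2 : ℵ₀ ≤ 2 ^ θ := hθ.trans (cantor θ).le
  have hS_card : ∀ o < (Order.succ θ).ord, #(S o) ≤ 2 ^ θ := by
    intro o
    induction o using WellFoundedLT.induction with
    | _ o IH =>
      intro ho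
      have hprev : #(⋃ i < o, S i) ≤ 2 ^ θ :=
        mk_biUnion_le_of_le ((Order.lt_succ_iff.1 (lt_ord.1 ho)).trans (cantor θ).le) hθ2 S
          fun i hi => IH i hi (hi.trans ho)
      rw [hS o]
      exact mk_biUnion_boundedSubsets_le hθ hprev fun B hB => hf B hB.2
  refine ⟨⋃ o < (Order.succ θ).ord, S o, ?_, fun B hB => ?_⟩
  · refine mk_biUnion_le_of_le ?_ hθ2 S hS_card
    rw [card_ord]
    exact Order.succ_le_of_lt (cantor θ)
  choose o ho hBo using fun b : B => mem_iUnion₂.1 (hB.1 b.2)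
  have hsup : ⨆ b, o b + 1 < (Order.succ θ).ord := by
    refine Ordinal.iSup_add_one_lt_of_lt_cof ?_ ho
    rw [(isRegular_succ hθ).cof_ord]
    exact hB.2.trans_lt (Order.lt_succ θ)
  refine (subset_biUnion_of_mem (u := S) hsup).trans' ?_
  rw [hS]
  refine subset_biUnion_of_mem (u := f) ⟨fun b hb => mem_iUnion₂.2 ⟨o ⟨b, hb⟩, ?_, hBo _⟩, hB.2⟩
  exact Order.add_one_le_iff.1 (Ordinal.le_iSup (fun b => o b + 1) ⟨b, hb⟩)

end ClosingOff

section Saturation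

variable {X : Type u} [TopologicalSpace X]

theorem mem_clk {κ : Cardinal.{u}} {A : Set X} {x : X} :
    x ∈ clk κ A ↔ ∃ B ⊆ A, #B ≤ κ ∧ x ∈ closure B := by
  simp [clk, and_assoc]

theorem IsWtWitness.exists_saturating {θ : Cardinal.{u}} (hθ : ℵ₀ ≤ θ) {𝒞 : Set (Set X)}
    (h𝒞 : IsWtWitness θ 𝒞) :
    ∃ s : X → Set X, (∀ x, #(s x) ≤ 2 ^ θ) ∧
      ∀ A : Set X, (∀ x ∈ A, s x ⊆ A) → Saturated 𝒞 A := by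
  choose! B hBC hBcard hxB using fun x C (hC : C ∈ 𝒞) =>
    mem_clk.1 ((h𝒞.2.2 C hC).2 ▸ mem_univ x)
  refine ⟨fun x => ⋃ C ∈ 𝒞, B x C, fun x => ?_, fun A hA C hC x hx => ?_⟩
  · calc #(⋃ C ∈ 𝒞, B x C) ≤ #𝒞 * ⨆ C : 𝒞, #(B x C) := mk_biUnion_le _ _
      _ ≤ 2 ^ θ * 2 ^ θ := mul_le_mul' h𝒞.2.1 (ciSup_le' fun C => hBcard x C C.2)
      _ = 2 ^ θ := mul_eq_self (hθ.trans (cantor θ).le)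
  · refine closure_mono (subset_inter ?_ (hBC x C hC)) (hxB x C hC)
    exact (subset_biUnion_of_mem hC).trans (hA x hx)

theorem Saturated.exists_subset_card_le_of_mem_closure {𝒞 : Set (Set X)} {A : Set X}
    (hA : Saturated 𝒞 A) (hcov : ⋃₀ 𝒞 = Set.univ) {θ : Cardinal.{u}}
    (ht : ∀ C ∈ 𝒞, tightness C ≤ θ) {x : X} (hx : x ∈ closure A) :
    ∃ B ⊆ A, #B ≤ θ ∧ x ∈ closure B := by
  obtain ⟨C, hC, hxC⟩ := mem_sUnion.1 (hcov ▸ mem_univ x)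
  have hx' : (⟨x, hxC⟩ : C) ∈ closure (Subtype.val ⁻¹' A) := by
    rw [closure_subtype, image_preimage_eq_inter_range, Subtype.range_coe]
    exact closure_minimal (hA C hC) isClosed_closure hx
  obtain ⟨B, hBA, hBcard, hxB⟩ := exists_subset_card_le_tightness_of_mem_closure hx'
  exact ⟨Subtype.val '' B, image_subset_iff.2 hBA, mk_image_le.trans (hBcard.trans (ht C hC)),
    closure_subtype.1 hxB⟩

theorem exists_forall_mem_closure_of_wt_le {θ : Cardinal.{u}} (hwtθ : wt X ≤ θ) :
    ∃ s : X → Set X, (∀ x, #(s x) ≤ 2 ^ θ) ∧ ∀ A : Set X, (∀ x ∈ A, s x ⊆ A) →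
      ∀ x ∈ closure A, ∃ B ∈ boundedSubsets θ A, x ∈ closure B := by
  obtain ⟨𝒞, h𝒞⟩ := exists_isWtWitness_wt (X := X)
  obtain ⟨s, hs_card, hs_sat⟩ := h𝒞.exists_saturating aleph0_le_wt
  refine ⟨s, fun x => (hs_card x).trans (power_le_power_left two_ne_zero hwtθ),
    fun A hA x hx => ?_⟩
  obtain ⟨B, hBA, hBcard, hxB⟩ := (hs_sat A hA).exists_subset_card_le_of_mem_closure h𝒞.1
    (fun C hC => (h𝒞.2.2 C hC).1.trans hwtθ) hx
  exact ⟨B, ⟨hBA, hBcard⟩, hxB⟩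

end Saturation

section GcSets

variable {X : Type u} [TopologicalSpace X] {κ : Cardinal.{u}}

theorem GcSet.univ : GcSet κ (Set.univ : Set X) :=
  ⟨∅, by simp, by simp, by simp, by simp⟩

theorem GcSet.inter (hκ : ℵ₀ ≤ κ) {G₁ G₂ : Set X} (h₁ : GcSet κ G₁) (h₂ : GcSet κ G₂) :
    GcSet κ (G₁ ∩ G₂) := by
  obtain ⟨𝒰₁, hcard₁, hopen₁, rfl, hcl₁⟩ := h₁
  obtain ⟨𝒰₂, hcard₂, hopen₂, rfl, hcl₂⟩ := h₂
  refine ⟨𝒰₁ ∪ 𝒰₂, ?_, fun U hU => hU.elim (hopen₁ U) (hopen₂ U), (sInter_union _ _).symm, ?_⟩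
  · exact (mk_union_le _ _).trans ((add_le_add hcard₁ hcard₂).trans_eq (add_eq_self hκ))
  · rw [biInter_union, ← hcl₁, ← hcl₂]

theorem isTopologicalBasis_gcSet (hκ : ℵ₀ ≤ κ) :
    @IsTopologicalBasis X (generateFrom {G : Set X | GcSet κ G}) {G : Set X | GcSet κ G} :=
  @isTopologicalBasis_of_subbasis_of_finiteInter X (generateFrom _) _ rfl
    ⟨GcSet.univ, fun _ h₁ _ h₂ => GcSet.inter hκ h₁ h₂⟩

end GcSets

section Covers

variable {X : Type u} [TopologicalSpace X]

theorem mem_iInter_closure_of_image_inter_subset {B : Set X} {𝒰 𝒰' : Set (Set X)} {y : X}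
    (hopen : ∀ U ∈ 𝒰', IsOpen U) (hy : y ∈ ⋂₀ 𝒰') (hyB : y ∈ closure B)
    (htrace : (· ∩ B) '' 𝒰 ⊆ (· ∩ B) '' 𝒰') : y ∈ ⋂ U ∈ 𝒰, closure U := by
  refine mem_iInter₂.2 fun U hU => ?_
  obtain ⟨U', hU', hUB⟩ := htrace (mem_image_of_mem _ hU)
  have hy' : y ∈ closure (U' ∩ B) := (hopen U' hU').inter_closure ⟨hy U' hU', hyB⟩
  rw [show U' ∩ B = U ∩ B from hUB] at hy'
  exact closure_mono inter_subset_left hy'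

theorem exists_subset_card_le_closure_subset_sUnion {κ θ : Cardinal.{u}} (hκθ : κ ≤ θ)
    (hθ : ℵ₀ ≤ θ) {𝒢 : Set (Set X)} (hGc : ∀ G ∈ 𝒢, GcSet κ G) (hcov : ⋃₀ 𝒢 = Set.univ)
    {B : Set X} (hB : #B ≤ θ) : ∃ ℛ ⊆ 𝒢, #ℛ ≤ 2 ^ θ ∧ closure B ⊆ ⋃₀ ℛ := by
  choose G hG𝒢 hxG using fun x : X => mem_sUnion.1 (hcov ▸ mem_univ x)
  choose! 𝒰 h𝒰card h𝒰open h𝒰 h𝒰cl using hGc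
  set trace : X → Set (Set X) := fun x => (· ∩ B) '' 𝒰 (G x)
  choose rep _ hrep using fun t (ht : t ∈ trace '' closure B) => ht
  refine ⟨range fun t : trace '' closure B => G (rep t t.2), range_subset_iff.2 fun t => hG𝒢 _,
    ?_, fun y hy => ?_⟩
  · calc #(range fun t : trace '' closure B => G (rep t t.2)) ≤ #(trace '' closure B) :=
          mk_range_le
      _ ≤ #(boundedSubsets θ (𝒫 B)) := by
        refine mk_le_mk_of_subset (image_subset_iff.2 fun x _ => ⟨?_, ?_⟩)
        · exact image_subset_iff.2 fun U _ => inter_subset_right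
        · exact mk_image_le.trans ((h𝒰card _ (hG𝒢 x)).trans hκθ)
      _ ≤ 2 ^ θ := by
        refine mk_boundedSubsets_le hθ ?_
        rw [mk_powerset]
        exact power_le_power_left two_ne_zero hB
  · have ht : trace y ∈ trace '' closure B := mem_image_of_mem trace hy
    refine ⟨G (rep _ ht), ⟨⟨_, ht⟩, rfl⟩, (h𝒰cl _ (hG𝒢 _)).ge ?_⟩
    exact mem_iInter_closure_of_image_inter_subset (h𝒰open _ (hG𝒢 y))
      ((h𝒰 _ (hG𝒢 y)).le (hxG y)) hy (hrep _ ht).le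

theorem sUnion_eq_univ_of_closure_subset {θ : Cardinal.{u}} (hLθ : LindelofNumber X ≤ θ)
    {𝒦 : Set (Set X)} {𝒰 : Set X → Set (Set X)} (hopen : ∀ G ∈ 𝒦, ∀ U ∈ 𝒰 G, IsOpen U)
    (hsub : ∀ G ∈ 𝒦, G ⊆ ⋂₀ 𝒰 G) (hsup : ∀ G ∈ 𝒦, ⋂ U ∈ 𝒰 G, closure U ⊆ G)
    {A : Set X} (hA : closure A ⊆ ⋃₀ 𝒦)
    (hwit : ∀ 𝒱 ⊆ ⋃ G ∈ 𝒦, 𝒰 G, #𝒱 ≤ θ → (⋃ V ∈ 𝒱, closure V)ᶜ.Nonempty →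
      ¬ A ⊆ ⋃ V ∈ 𝒱, closure V) :
    ⋃₀ 𝒦 = Set.univ := by
  refine eq_univ_of_forall fun q => by_contra fun hq => ?_
  choose! V hV hqV using fun G (hG : G ∈ 𝒦) => by
    simpa using fun h => hq ⟨G, hG, hsup G hG (mem_iInter₂.2 h)⟩
  obtain ⟨𝒲, h𝒲, h𝒲card, hA𝒲⟩ := isClosed_closure.exists_subcover_card_le_lindelofNumber
    (forall_mem_image.2 fun G hG => hopen G hG _ (hV G hG)) fun x hx => by
      obtain ⟨G, hG, hxG⟩ := hA hx
      exact ⟨V G, mem_image_of_mem V hG, hsub G hG hxG (V G) (hV G hG)⟩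
  refine hwit 𝒲 (h𝒲.trans (image_subset_iff.2 fun G hG => mem_biUnion hG (hV G hG)))
    (h𝒲card.trans hLθ) ⟨q, ?_⟩ fun a ha => ?_
  · simp only [mem_compl_iff, mem_iUnion₂, not_exists]
    rintro W hW hqW
    obtain ⟨G, hG, rfl⟩ := h𝒲 hW
    exact hqV G hG hqW
  · obtain ⟨W, hW, haW⟩ := hA𝒲 (subset_closure ha)
    exact mem_biUnion hW (subset_closure haW)

end Covers

theorem exists_gcSet_subcover_card_le {X : Type u} [TopologicalSpace X] {κ θ : Cardinal.{u}}
    (hκθ : κ ≤ θ) (hLθ : LindelofNumber X ≤ θ) (hwtθ : wt X ≤ θ) {𝒢 : Set (Set X)}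
    (hGc : ∀ G ∈ 𝒢, GcSet κ G) (hcov : ⋃₀ 𝒢 = Set.univ) :
    ∃ 𝒢' ⊆ 𝒢, #𝒢' ≤ 2 ^ θ ∧ ⋃₀ 𝒢' = Set.univ := by
  rcases isEmpty_or_nonempty X with hX | hX
  · exact ⟨∅, empty_subset _, by simp, by simp [eq_empty_of_isEmpty Set.univ]⟩
  have hθ : ℵ₀ ≤ θ := aleph0_le_lindelofNumber.trans hLθ
  have hθ2 : ℵ₀ ≤ 2 ^ θ := hθ.trans (cantor θ).le
  obtain ⟨s, hs_card, hs_closure⟩ := exists_forall_mem_closure_of_wt_le hwtθ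
  choose! ℛ hℛ𝒢 hℛcard hℛcl using fun (B : Set X) (hB : #B ≤ θ) =>
    exists_subset_card_le_closure_subset_sUnion hκθ hθ hGc hcov hB
  choose! 𝒰 h𝒰card h𝒰open h𝒰 h𝒰cl using fun G (hG : G ∈ 𝒢) => hGc G hG
  set pool : Set X → Set (Set X) := fun A => ⋃ B ∈ boundedSubsets θ A, ⋃ G ∈ ℛ B, 𝒰 G
  choose! w hw using fun (𝒱 : Set (Set X)) (h : (⋃ V ∈ 𝒱, closure V)ᶜ.Nonempty) => h
  obtain ⟨A, hA_card, hA⟩ := exists_forall_boundedSubsets_subset hθ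
    (fun B => (⋃ x ∈ B, s x) ∪ w '' boundedSubsets θ (pool B)) fun B hB => by
      have hB' : #B ≤ 2 ^ θ := hB.trans (cantor θ).le
      have hpool : #(pool B) ≤ 2 ^ θ := mk_biUnion_boundedSubsets_le hθ hB' fun B' hB' =>
        mk_biUnion_le_of_forall_le hθ2 (hℛcard B' hB'.2) fun G hG =>
          (h𝒰card G (hℛ𝒢 B' hB'.2 hG)).trans (hκθ.trans (cantor θ).le)
      refine (mk_union_le _ _).trans ((add_le_add ?_ ?_).trans_eq (add_eq_self hθ2))
      · exact mk_biUnion_le_of_forall_le hθ2 hB' fun x _ => hs_card x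
      · exact mk_image_le.trans (mk_boundedSubsets_le hθ hpool)
  have h𝒦 : (⋃ B ∈ boundedSubsets θ A, ℛ B) ⊆ 𝒢 := iUnion₂_subset fun B hB => hℛ𝒢 B hB.2
  refine ⟨_, h𝒦, mk_biUnion_boundedSubsets_le hθ hA_card fun B hB => hℛcard B hB.2, ?_⟩
  refine sUnion_eq_univ_of_closure_subset hLθ (fun G hG => h𝒰open G (h𝒦 hG))
    (fun G hG => (h𝒰 G (h𝒦 hG)).le) (fun G hG => (h𝒰cl G (h𝒦 hG)).ge) (A := A) ?_ ?_
  · intro x hx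
    have hsA : ∀ x ∈ A, s x ⊆ A := fun x hx =>
      (subset_biUnion_of_mem (mem_singleton x)).trans <| subset_union_left.trans <|
        hA {x} ⟨singleton_subset_iff.2 hx, (mk_singleton x).trans_le (one_le_aleph0.trans hθ)⟩
    obtain ⟨B, hB, hxB⟩ := hs_closure A hsA x hx
    obtain ⟨G, hG, hxG⟩ := hℛcl B hB.2 hxB
    exact ⟨G, mem_biUnion hB hG, hxG⟩
  · intro 𝒱 h𝒱 h𝒱card hne hA𝒱
    have h𝒱pool : 𝒱 ⊆ pool A := fun V hV => by
      obtain ⟨G, hG, hVG⟩ := mem_iUnion₂.1 (h𝒱 hV)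
      obtain ⟨B, hB, hGB⟩ := mem_iUnion₂.1 hG
      exact mem_biUnion hB (mem_biUnion hGB hVG)
    obtain ⟨B, hB, h𝒱B⟩ := exists_mem_boundedSubsets_of_subset_biUnion hθ h𝒱pool h𝒱card
    exact hw 𝒱 hne (hA𝒱 (hA B hB (Or.inr (mem_image_of_mem w ⟨h𝒱B, h𝒱card⟩))))

/-- Main Theorem: `L(X^c_κ) ≤ 2^{L(X)·wt(X)·κ}`. -/
theorem stmt10 {X : Type u} [TopologicalSpace X] (κ : Cardinal.{u}) (hκ : ℵ₀ ≤ κ) :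
    @LindelofNumber X (generateFrom {G : Set X | GcSet κ G}) ≤
      2 ^ (LindelofNumber X * wt X * κ) := by
  have hθ : LindelofNumber X * wt X * κ = max (max (LindelofNumber X) (wt X)) κ := by
    rw [mul_eq_max aleph0_le_lindelofNumber aleph0_le_wt,
      mul_eq_max (aleph0_le_lindelofNumber.trans (le_max_left _ _)) hκ]
  have hκθ : κ ≤ LindelofNumber X * wt X * κ := hθ ▸ le_max_right _ _
  refine @lindelofNumber_le_of_isTopologicalBasis X (generateFrom _) _ (isTopologicalBasis_gcSet hκ)
    _ ((hκ.trans hκθ).trans (cantor _).le) fun 𝒢 hGc hcov => ?_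
  exact exists_gcSet_subcover_card_le hκθ (hθ ▸ (le_max_left _ _).trans (le_max_left _ _))
    (hθ ▸ (le_max_right _ _).trans (le_max_left _ _)) hGc hcov
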